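/- arXiv:1606.05216 — 2 statements merged into one kernel-verified Lean document; each statement's English description precedes it below -/
import Mathlib

section
/- If M is a symmetric 3×3 matrix and P = S + A with S symmetric and A antisymmetric, then (−S_Q(M) + Q·M − M·Q):P = (−S_Q(S) + Q·A − A·Q):M. -/
open Matrix BigOperators Finset

noncomputable def frob (A B : Matrix (Fin 3) (Fin 3) ℝ) : ℝ := Matrix.trace (A * Bᵀ)

noncomputable def SQ (ξ : ℝ) (Q M : Matrix (Fin 3) (Fin 3) ℝ) : Matrix (Fin 3) (Fin 3) ℝ :=
  ξ • (((1/2 : ℝ) • (M + Mᵀ)) * (Q + (1/3 : ℝ) • (1 : Matrix (Fin 3) (Fin 3) ℝ))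
    + (Q + (1/3 : ℝ) • (1 : Matrix (Fin 3) (Fin 3) ℝ)) * ((1/2 : ℝ) • (M + Mᵀ))
    - (2 * frob (Q + (1/3 : ℝ) • (1 : Matrix (Fin 3) (Fin 3) ℝ)) M) •
        (Q + (1/3 : ℝ) • (1 : Matrix (Fin 3) (Fin 3) ℝ)))

set_option maxHeartbeats 2000000 in
theorem stmt2 (ξ : ℝ) (Q M P : Matrix (Fin 3) (Fin 3) ℝ) (hQs : Qᵀ = Q)
    (hQt : Matrix.trace Q = 0) (hM : Mᵀ = M) :
    frob (-(SQ ξ Q M) + Q * M - M * Q) P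
      = frob (-(SQ ξ Q ((1/2 : ℝ) • (P + Pᵀ)))
          + Q * ((1/2 : ℝ) • (P - Pᵀ)) - ((1/2 : ℝ) • (P - Pᵀ)) * Q) M := by
  have hQ : ∀ i j, Q i j = Q j i := fun i j => (Matrix.transpose_apply Q j i).symm.trans (congrFun (congrFun hQs j) i)
  have hM' : ∀ i j, M i j = M j i := fun i j => (Matrix.transpose_apply M j i).symm.trans (congrFun (congrFun hM j) i)
  simp only [Matrix.trace, Matrix.diag, Fin.sum_univ_three] at hQt
  have h22 : Q 2 2 = -(Q 0 0 + Q 1 1) := by linarith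
  simp only [frob, SQ, Matrix.trace, Matrix.diag, Matrix.mul_apply, Fin.sum_univ_three,
    Matrix.add_apply, Matrix.sub_apply, Matrix.neg_apply, Matrix.smul_apply, Matrix.one_apply,
    Matrix.transpose_apply, smul_eq_mul, Fin.isValue, Fin.reduceEq, reduceIte]
  rw [hQ 1 0, hQ 2 0, hQ 2 1, hM' 1 0, hM' 2 0, hM' 2 1, h22]
  ring
end

section
/- Cancellation law for the coupling stresses: for Q traceless symmetric, M traceless symmetric, and u a vector field with gradient ∇u = D + W (D symmetric, W antisymmetric), one has (−S_Q(M) + Q·M − M·Q):∇u = (−S_Q(D) + Q·W − W·Q):M. -/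
set_option maxHeartbeats 4000000

open Matrix BigOperators Finset

theorem stmt11 (ξ : ℝ) (Q M G : Matrix (Fin 3) (Fin 3) ℝ)
    (hQs : Qᵀ = Q) (hQt : Matrix.trace Q = 0)
    (hMs : Mᵀ = M) (hMt : Matrix.trace M = 0) :
    frob (-(SQ ξ Q M) + Q * M - M * Q) G
      = frob (-(SQ ξ Q ((1/2 : ℝ) • (G + Gᵀ)))
          + Q * ((1/2 : ℝ) • (G - Gᵀ)) - ((1/2 : ℝ) • (G - Gᵀ)) * Q) M := by
  have hQ : ∀ i j, Q j i = Q i j := fun i j => congrFun (congrFun hQs i) j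
  have hM : ∀ i j, M j i = M i j := fun i j => congrFun (congrFun hMs i) j
  simp only [Matrix.trace, Matrix.diag, Fin.sum_univ_three] at hQt hMt
  have hQ22 : Q 2 2 = -(Q 0 0) - Q 1 1 := by linarith
  have hM22 : M 2 2 = -(M 0 0) - M 1 1 := by linarith
  simp only [frob, SQ, Matrix.trace, Matrix.diag, Fin.sum_univ_three, Matrix.mul_apply,
    Matrix.add_apply, Matrix.sub_apply, Matrix.neg_apply, Matrix.smul_apply,
    Matrix.transpose_apply, smul_eq_mul]
  simp only [Matrix.one_apply, Fin.isValue, if_true, one_ne_zero, Fin.reduceEq, if_false, ite_true, ite_false]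
  rw [hQ 0 1, hQ 0 2, hQ 1 2, hM 0 1, hM 0 2, hM 1 2, hQ22, hM22]
  ring
end
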